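/- arXiv:1812.02198 — 3 statements merged into one kernel-verified Lean document; each statement's English description precedes it below -/
import Mathlib

section
/- Let f be a C² function without critical points on a domain Ω ⊆ ℝ², with N = ∇f/‖∇f‖ and κ the signed curvature of its level curves (with respect to N). Then f is harmonic on Ω if and only if κ(p) · D_N f(p) = D²_N f(p) for every p ∈ Ω. -/
/-! With `T = γ'(0)` the unit tangent of the level curve through `p`, the pair `(T, N)` is an
orthonormal frame, so `Δf(p) = D²f(p)(T, T) + D²f(p)(N, N)` is the trace of the Hessian in that
frame. Differentiating `⟪∇f(γ s), γ'(s)⟫ = 0` at `s = 0` gives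
`D²f(p)(T, T) = -⟪∇f(p), γ''(0)⟫ = -κ(p) ‖∇f(p)‖`, hence `Δf = D²_N f - κ D_N f` pointwise. -/

open scoped InnerProductSpace

/-- The Hessian quadratic form of `f` at `p` evaluated at `(v, v)`
(the second directional derivative of `f` at `p` along `v`). -/
noncomputable def hessQF {n : ℕ} (f : EuclideanSpace ℝ (Fin n) → ℝ)
    (p v : EuclideanSpace ℝ (Fin n)) : ℝ :=
  ⟪fderiv ℝ (gradient f) p v, v⟫_ℝ

/-- The Laplacian of `f` at `p`. -/
noncomputable def lap {n : ℕ} (f : EuclideanSpace ℝ (Fin n) → ℝ)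
    (p : EuclideanSpace ℝ (Fin n)) : ℝ :=
  ∑ i : Fin n,
    ⟪fderiv ℝ (gradient f) p (EuclideanSpace.single i 1), EuclideanSpace.single i (1:ℝ)⟫_ℝ

open InnerProductSpace Topology

section LevelCurve

variable {E : Type*} [NormedAddCommGroup E] [InnerProductSpace ℝ E] [CompleteSpace E]
  {f : E → ℝ} {γ : ℝ → E}

theorem ContDiffAt.differentiableAt_gradient {x : E} (hf : ContDiffAt ℝ 2 f x) :
    DifferentiableAt ℝ (gradient f) x :=
  ((toDual ℝ E).symm.contDiff.contDiffAt.comp x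
    (hf.fderiv_right (m := 1) (by norm_num))).differentiableAt one_ne_zero

theorem inner_gradient_deriv_eq_zero_of_eventually_const {s : ℝ} {c : ℝ}
    (hf : DifferentiableAt ℝ f (γ s)) (hγ : DifferentiableAt ℝ γ s)
    (hconst : f ∘ γ =ᶠ[𝓝 s] fun _ ↦ c) :
    ⟪gradient f (γ s), deriv γ s⟫_ℝ = 0 := by
  rw [inner_gradient_left, ← fderiv_comp_deriv s hf hγ]
  exact hconst.deriv_eq.trans (deriv_const s c)

theorem inner_fderiv_gradient_deriv_of_eventually_const {t : ℝ} (hf : ContDiffAt ℝ 2 f (γ t))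
    (hγ : ContDiff ℝ 2 γ) (hconst : ∀ᶠ s in 𝓝 t, f (γ s) = f (γ t)) :
    ⟪fderiv ℝ (gradient f) (γ t) (deriv γ t), deriv γ t⟫_ℝ =
      -⟪gradient f (γ t), deriv (deriv γ) t⟫_ℝ := by
  have hγ' : ContDiff ℝ 1 (deriv γ) := hγ.iterate_deriv' 1 1
  have hf_near : ∀ᶠ s in 𝓝 t, DifferentiableAt ℝ f (γ s) :=
    hγ.continuous.continuousAt.eventually
      ((hf.eventually (by simp)).mono fun _ h ↦ h.differentiableAt (by norm_num))
  have hzero : (fun s ↦ ⟪gradient f (γ s), deriv γ s⟫_ℝ) =ᶠ[𝓝 t] fun _ ↦ 0 := by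
    filter_upwards [hf_near, hconst.eventually_nhds] with s hfs hcs
    exact inner_gradient_deriv_eq_zero_of_eventually_const hfs
      (hγ.differentiable (by norm_num) s) hcs
  have hderiv := ((hf.differentiableAt_gradient.hasFDerivAt.comp_hasDerivAt t
    ((hγ.differentiable (by norm_num)) t).hasDerivAt).inner ℝ
    ((hγ'.differentiable one_ne_zero) t).hasDerivAt)
  exact eq_neg_of_add_eq_zero_right
    ((hzero.hasDerivAt_iff.mp hderiv).unique (hasDerivAt_const t 0))

end LevelCurve

section Laplacian

variable {n : ℕ} (f : EuclideanSpace ℝ (Fin n) → ℝ) (p : EuclideanSpace ℝ (Fin n))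

theorem lap_eq_trace :
    lap f p = LinearMap.trace ℝ _ (fderiv ℝ (gradient f) p).toLinearMap := by
  rw [LinearMap.trace_eq_sum_inner _ (EuclideanSpace.basisFun (Fin n) ℝ), lap]
  simp only [EuclideanSpace.basisFun_apply, ContinuousLinearMap.coe_coe, real_inner_comm]

theorem lap_eq_sum_hessQF {ι : Type*} [Fintype ι]
    (b : OrthonormalBasis ι ℝ (EuclideanSpace ℝ (Fin n))) :
    lap f p = ∑ i, hessQF f p (b i) := by
  rw [lap_eq_trace, LinearMap.trace_eq_sum_inner _ b]
  simp only [hessQF, ContinuousLinearMap.coe_coe, real_inner_comm]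

end Laplacian

theorem EuclideanSpace.inner_fin_two (x y : EuclideanSpace ℝ (Fin 2)) :
    ⟪x, y⟫_ℝ = x 0 * y 0 + x 1 * y 1 := by
  simp [PiLp.inner_apply, Fin.sum_univ_two, mul_comm]

theorem orthonormal_of_eq_rotation {T N : EuclideanSpace ℝ (Fin 2)} (hT : ‖T‖ = 1)
    (h0 : T 0 = N 1) (h1 : T 1 = -N 0) : Orthonormal ℝ ![T, N] := by
  have hN : ‖N‖ = 1 := by
    rw [← hT, EuclideanSpace.norm_eq, EuclideanSpace.norm_eq]
    simp [Fin.sum_univ_two, h0, h1, add_comm]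
  have hTN : ⟪T, N⟫_ℝ = 0 := by
    rw [EuclideanSpace.inner_fin_two, h0, h1]; ring
  rw [orthonormal_iff_ite]
  intro i j
  fin_cases i <;> fin_cases j <;> simp [hT, hN, hTN, real_inner_comm T N]

theorem lap_eq_hessQF_add_hessQF (f : EuclideanSpace ℝ (Fin 2) → ℝ)
    {p T N : EuclideanSpace ℝ (Fin 2)} (hT : ‖T‖ = 1) (h0 : T 0 = N 1) (h1 : T 1 = -N 0) :
    lap f p = hessQF f p T + hessQF f p N := by
  have hTN := orthonormal_of_eq_rotation hT h0 h1
  rw [lap_eq_sum_hessQF f p (.mk hTN (hTN.linearIndependent.span_eq_top_of_card_eq_finrank'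
    (by simp)).ge)]
  simp [Fin.sum_univ_two]

theorem lap_eq_hessQF_sub_curvature_mul_norm_gradient {f : EuclideanSpace ℝ (Fin 2) → ℝ}
    {p N : EuclideanSpace ℝ (Fin 2)} {κ : ℝ} {γ : ℝ → EuclideanSpace ℝ (Fin 2)}
    (hf : ContDiffAt ℝ 2 f p) (hN : N = ‖gradient f p‖⁻¹ • gradient f p)
    (hγ : ContDiff ℝ 2 γ) (hγ0 : γ 0 = p) (hconst : ∀ᶠ s in 𝓝 0, f (γ s) = f p)
    (hspeed : ‖deriv γ 0‖ = 1) (h0 : deriv γ 0 0 = N 1) (h1 : deriv γ 0 1 = -N 0)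
    (hacc : deriv (deriv γ) 0 = κ • N) :
    lap f p = hessQF f p N - κ * ‖gradient f p‖ := by
  subst hγ0
  have htangent : hessQF f (γ 0) (deriv γ 0) = -(κ * ‖gradient f (γ 0)‖) := by
    rw [hessQF, inner_fderiv_gradient_deriv_of_eventually_const hf hγ hconst, hacc, hN,
      real_inner_smul_right, real_inner_smul_right, real_inner_self_eq_norm_mul_norm,
      ← mul_assoc _⁻¹, inv_mul_mul_self]
  rw [lap_eq_hessQF_add_hessQF f hspeed h0 h1, htangent]
  ring

theorem stmt2_general {Ω : Set (EuclideanSpace ℝ (Fin 2))} (hΩ : IsOpen Ω)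
    (f : EuclideanSpace ℝ (Fin 2) → ℝ) (hf : ContDiffOn ℝ 2 f Ω)
    (N : EuclideanSpace ℝ (Fin 2) → EuclideanSpace ℝ (Fin 2))
    (hN : ∀ p ∈ Ω, N p = ‖gradient f p‖⁻¹ • gradient f p)
    (κ : EuclideanSpace ℝ (Fin 2) → ℝ)
    -- κ(p) is defined by γ''(0) = κ(p) • N(p) for a unit-speed parametrization γ of
    -- the level curve through p with (γ'(0), N(p)) positively oriented
    (hκ : ∀ p ∈ Ω, ∃ γ : ℝ → EuclideanSpace ℝ (Fin 2),
      ContDiff ℝ 2 γ ∧ γ 0 = p ∧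
      (∀ᶠ s in nhds 0, f (γ s) = f p) ∧
      (∀ᶠ s in nhds 0, ‖deriv γ s‖ = 1) ∧
      (deriv γ 0) 0 = (N p) 1 ∧ (deriv γ 0) 1 = -((N p) 0) ∧
      deriv (deriv γ) 0 = κ p • N p) :
    (∀ p ∈ Ω, lap f p = 0) ↔
      (∀ p ∈ Ω, κ p * ‖gradient f p‖ = hessQF f p (N p)) := by
  refine forall₂_congr fun p hp ↦ ?_
  obtain ⟨γ, hγ, hγ0, hconst, hspeed, h0, h1, hacc⟩ := hκ p hp
  rw [lap_eq_hessQF_sub_curvature_mul_norm_gradient (hf.contDiffAt (hΩ.mem_nhds hp)) (hN p hp)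
    hγ hγ0 hconst hspeed.self_of_nhds h0 h1 hacc, sub_eq_zero, eq_comm]

theorem stmt2 {Ω : Set (EuclideanSpace ℝ (Fin 2))} (hΩ : IsOpen Ω)
    (f : EuclideanSpace ℝ (Fin 2) → ℝ) (hf : ContDiffOn ℝ 2 f Ω)
    (hgrad : ∀ p ∈ Ω, gradient f p ≠ 0)
    (N : EuclideanSpace ℝ (Fin 2) → EuclideanSpace ℝ (Fin 2))
    (hN : ∀ p ∈ Ω, N p = ‖gradient f p‖⁻¹ • gradient f p)
    (κ : EuclideanSpace ℝ (Fin 2) → ℝ)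
    -- κ(p) is defined by γ''(0) = κ(p) • N(p) for a unit-speed parametrization γ of
    -- the level curve through p with (γ'(0), N(p)) positively oriented
    (hκ : ∀ p ∈ Ω, ∃ γ : ℝ → EuclideanSpace ℝ (Fin 2),
      ContDiff ℝ 2 γ ∧ γ 0 = p ∧
      (∀ᶠ s in nhds 0, f (γ s) = f p) ∧
      (∀ᶠ s in nhds 0, ‖deriv γ s‖ = 1) ∧
      (deriv γ 0) 0 = (N p) 1 ∧ (deriv γ 0) 1 = -((N p) 0) ∧
      deriv (deriv γ) 0 = κ p • N p) :
    (∀ p ∈ Ω, lap f p = 0) ↔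
      (∀ p ∈ Ω, κ p * ‖gradient f p‖ = hessQF f p (N p)) :=
  stmt2_general hΩ f hf N hN κ hκ
end

section
/- Let U be a critical-point-free harmonic function on a domain Ω ⊆ ℝ² and α : (−δ, δ) → Ω an integral curve of ∇U/‖∇U‖. Then ‖∇U(α(s))‖ = ‖∇U(α(0))‖ · exp(∫₀ˢ κ(α(ξ)) dξ), where κ(p) is the signed curvature at p of the level curve of U through p, signed with respect to the normal ∇U/‖∇U‖. -/
/-!
Write `N = ∇U/‖∇U‖` and `T` for `N` rotated by a right angle. Along the integral curve,
`d/ds ‖∇U(α s)‖ = ⟨D(∇U) N, ∇U⟩/‖∇U‖ = D²_N U`. Since `ΔU = tr D²U = 0`, the Hessian forms in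
the orthonormal directions `N` and `T` are opposite, so `D²_N U = -D²_T U = κ ‖∇U‖`. Thus
`‖∇U ∘ α‖` solves the linear equation `f' = (κ ∘ α) f`, whose solutions are
`f s = f 0 · exp ∫₀ˢ κ ∘ α`.
-/

open scoped InnerProductSpace

open Set

def rot90 (v : EuclideanSpace ℝ (Fin 2)) : EuclideanSpace ℝ (Fin 2) := !₂[-v 1, v 0]

@[simp] lemma rot90_apply_zero (v : EuclideanSpace ℝ (Fin 2)) : rot90 v 0 = -v 1 := rfl
@[simp] lemma rot90_apply_one (v : EuclideanSpace ℝ (Fin 2)) : rot90 v 1 = v 0 := rfl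

lemma norm_rot90 (v : EuclideanSpace ℝ (Fin 2)) : ‖rot90 v‖ = ‖v‖ := by
  simp [EuclideanSpace.norm_eq, Fin.sum_univ_two, add_comm]

lemma inner_rot90_self (v : EuclideanSpace ℝ (Fin 2)) : ⟪rot90 v, v⟫_ℝ = 0 := by
  simp [PiLp.inner_apply, Fin.sum_univ_two]; ring

lemma inner_apply_self_eq_sum (A : EuclideanSpace ℝ (Fin 2) →ₗ[ℝ] EuclideanSpace ℝ (Fin 2))
    (v : EuclideanSpace ℝ (Fin 2)) :
    ⟪A v, v⟫_ℝ = ∑ i, ∑ j,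
      v i * v j * ⟪A (EuclideanSpace.single i 1), EuclideanSpace.single j (1:ℝ)⟫_ℝ := by
  have hv : v = v 0 • EuclideanSpace.single 0 1 + v 1 • EuclideanSpace.single 1 1 := by
    ext j; fin_cases j <;> simp
  conv_lhs => rw [hv]
  simp only [map_add, map_smul, inner_add_left, inner_add_right, real_inner_smul_left,
    real_inner_smul_right, Fin.sum_univ_two]
  ring

lemma inner_apply_self_add_inner_apply_rot90
    (A : EuclideanSpace ℝ (Fin 2) →ₗ[ℝ] EuclideanSpace ℝ (Fin 2)) (v : EuclideanSpace ℝ (Fin 2)) :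
    ⟪A v, v⟫_ℝ + ⟪A (rot90 v), rot90 v⟫_ℝ =
      ‖v‖ ^ 2 * ∑ i, ⟪A (EuclideanSpace.single i 1), EuclideanSpace.single i (1:ℝ)⟫_ℝ := by
  rw [inner_apply_self_eq_sum, inner_apply_self_eq_sum]
  simp only [EuclideanSpace.norm_sq_eq, Fin.sum_univ_two,
    rot90_apply_zero, rot90_apply_one, Real.norm_eq_abs, sq_abs]
  ring

lemma hessQF_rot90 (f : EuclideanSpace ℝ (Fin 2) → ℝ) (p v : EuclideanSpace ℝ (Fin 2)) :
    hessQF f p (rot90 v) = ‖v‖ ^ 2 * lap f p - hessQF f p v := by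
  rw [eq_sub_iff_add_eq', hessQF, hessQF, lap]
  exact inner_apply_self_add_inner_apply_rot90 (fderiv ℝ (gradient f) p).toLinearMap v

lemma hessQF_smul {n : ℕ} (f : EuclideanSpace ℝ (Fin n) → ℝ) (p v : EuclideanSpace ℝ (Fin n))
    (c : ℝ) : hessQF f p (c • v) = c ^ 2 * hessQF f p v := by
  simp only [hessQF, map_smul, real_inner_smul_left, real_inner_smul_right]
  ring

lemma curvature_eq_hessQF_gradient {U κ : EuclideanSpace ℝ (Fin 2) → ℝ}
    {p : EuclideanSpace ℝ (Fin 2)} (hgrad : gradient U p ≠ 0) (hharm : lap U p = 0)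
    (hκ : ∀ T : EuclideanSpace ℝ (Fin 2), ‖T‖ = 1 → ⟪T, gradient U p⟫_ℝ = 0 →
      κ p = -(hessQF U p T) / ‖gradient U p‖) :
    κ p = hessQF U p (gradient U p) / ‖gradient U p‖ ^ 3 := by
  set g := gradient U p
  have hg : ‖g‖ ≠ 0 := norm_ne_zero_iff.mpr hgrad
  have hT : ‖‖g‖⁻¹ • rot90 g‖ = 1 := by
    rw [norm_smul, norm_rot90, norm_inv, norm_norm, inv_mul_cancel₀ hg]
  have hTg : ⟪‖g‖⁻¹ • rot90 g, g⟫_ℝ = 0 := by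
    rw [real_inner_smul_left, inner_rot90_self, mul_zero]
  rw [hκ _ hT hTg, hessQF_smul, hessQF_rot90, hharm]
  field_simp
  ring

lemma ContDiffOn.gradient_of_isOpen {F : Type*} [NormedAddCommGroup F] [InnerProductSpace ℝ F]
    [CompleteSpace F] {f : F → ℝ} {s : Set F} {m n : WithTop ℕ∞} (hf : ContDiffOn ℝ n f s)
    (hs : IsOpen s) (hmn : m + 1 ≤ n) : ContDiffOn ℝ m (gradient f) s :=
  (InnerProductSpace.toDual ℝ F).symm.contDiff.comp_contDiffOn (hf.fderiv_of_isOpen hs hmn)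

lemma HasDerivAt.norm {F : Type*} [NormedAddCommGroup F] [InnerProductSpace ℝ F] {f : ℝ → F}
    {f' : F} {x : ℝ} (hf : HasDerivAt f f' x) (hx : f x ≠ 0) :
    HasDerivAt (fun t => ‖f t‖) (⟪f x, f'⟫_ℝ / ‖f x‖) x := by
  have hsq := (hf.norm_sq).sqrt (by positivity)
  simp only [Real.sqrt_sq (norm_nonneg _)] at hsq
  convert hsq using 1
  field_simp

theorem eq_mul_exp_integral_of_hasDerivAt {f k : ℝ → ℝ} {a b x₀ x : ℝ}
    (hk : ContinuousOn k (Ioo a b)) (hf : ∀ t ∈ Ioo a b, HasDerivAt f (k t * f t) t)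
    (hx₀ : x₀ ∈ Ioo a b) (hx : x ∈ Ioo a b) :
    f x = f x₀ * Real.exp (∫ t in x₀..x, k t) := by
  set I : ℝ → ℝ := fun u => ∫ t in x₀..u, k t
  have hI : ∀ t ∈ Ioo a b, HasDerivAt I (k t) t := fun t ht =>
    intervalIntegral.integral_hasDerivAt_right
      ((hk.mono (ordConnected_Ioo.uIcc_subset hx₀ ht)).intervalIntegrable)
      (hk.stronglyMeasurableAtFilter isOpen_Ioo t ht)
      (hk.continuousAt (isOpen_Ioo.mem_nhds ht))
  have hconst : ∀ t ∈ Ioo a b, HasDerivAt (fun u => f u * Real.exp (-I u)) 0 t := fun t ht =>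
    ((hf t ht).mul (hI t ht).neg.exp).congr_deriv (by ring)
  have key : f x * Real.exp (-I x) = f x₀ * Real.exp (-I x₀) :=
    isOpen_Ioo.is_const_of_deriv_eq_zero isPreconnected_Ioo
      (fun t ht => (hconst t ht).differentiableAt.differentiableWithinAt)
      (fun t ht => (hconst t ht).deriv) hx hx₀
  simp only [I, intervalIntegral.integral_same, neg_zero, Real.exp_zero, mul_one] at key
  rw [← key, mul_assoc, ← Real.exp_add, neg_add_cancel, Real.exp_zero, mul_one]

theorem stmt6 {Ω : Set (EuclideanSpace ℝ (Fin 2))} (hΩ : IsOpen Ω)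
    (U : EuclideanSpace ℝ (Fin 2) → ℝ) (hU : ContDiffOn ℝ 2 U Ω)
    (hgrad : ∀ p ∈ Ω, gradient U p ≠ 0)
    (hharm : ∀ p ∈ Ω, lap U p = 0)
    (N : EuclideanSpace ℝ (Fin 2) → EuclideanSpace ℝ (Fin 2))
    (hN : ∀ p ∈ Ω, N p = ‖gradient U p‖⁻¹ • gradient U p)
    (κ : EuclideanSpace ℝ (Fin 2) → ℝ)
    -- κ(p) = −D²_T U(p)/‖∇U(p)‖ where T is a unit tangent to the level curve at p
    (hκ : ∀ p ∈ Ω, ∀ T : EuclideanSpace ℝ (Fin 2),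
      ‖T‖ = 1 → ⟪T, gradient U p⟫_ℝ = 0 →
      κ p = -(hessQF U p T) / ‖gradient U p‖)
    (δ : ℝ) (hδ : 0 < δ)
    (α : ℝ → EuclideanSpace ℝ (Fin 2))
    (hα : ∀ s ∈ Set.Ioo (-δ) δ, α s ∈ Ω ∧ HasDerivAt α (N (α s)) s) :
    ∀ s ∈ Set.Ioo (-δ) δ,
      ‖gradient U (α s)‖ =
        ‖gradient U (α 0)‖ * Real.exp (∫ ξ in (0:ℝ)..s, κ (α ξ)) := by
  have hC1 : ContDiffOn ℝ 1 (gradient U) Ω := hU.gradient_of_isOpen hΩ (by norm_num)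
  have hκ_eq : ∀ p ∈ Ω, κ p = hessQF U p (gradient U p) / ‖gradient U p‖ ^ 3 := fun p hp =>
    curvature_eq_hessQF_gradient (hgrad p hp) (hharm p hp) (hκ p hp)
  have hκ_cont : ContinuousOn κ Ω := by
    refine ContinuousOn.congr ?_ hκ_eq
    exact (((hC1.continuousOn_fderiv_of_isOpen hΩ le_rfl).clm_apply hC1.continuousOn).inner
      hC1.continuousOn).div (hC1.continuousOn.norm.pow 3)
      fun p hp => pow_ne_zero 3 (norm_ne_zero_iff.mpr (hgrad p hp))
  have hα_cont : ContinuousOn α (Ioo (-δ) δ) := fun t ht =>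
    (hα t ht).2.continuousAt.continuousWithinAt
  have hderiv : ∀ t ∈ Ioo (-δ) δ,
      HasDerivAt (fun u => ‖gradient U (α u)‖) (κ (α t) * ‖gradient U (α t)‖) t := by
    intro t ht
    obtain ⟨hαΩ, hαt⟩ := hα t ht
    have hg : ‖gradient U (α t)‖ ≠ 0 := norm_ne_zero_iff.mpr (hgrad _ hαΩ)
    have hgα := ((hC1.differentiableOn one_ne_zero).differentiableAt
      (hΩ.mem_nhds hαΩ)).hasFDerivAt.comp_hasDerivAt t hαt
    have hnorm := hgα.norm (hgrad _ hαΩ)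
    simp only [Function.comp_apply] at hnorm
    convert hnorm using 1
    rw [hN _ hαΩ, map_smul, real_inner_smul_right, real_inner_comm, hκ_eq _ hαΩ, hessQF]
    field_simp
  intro s hs
  exact eq_mul_exp_integral_of_hasDerivAt (hκ_cont.comp hα_cont fun t ht => (hα t ht).1)
    hderiv ⟨by linarith, hδ⟩ hs
end

section
/- Let Φ : ℝⁿ⁻¹ × (−ε, ε) → ℝⁿ be an orientation-preserving C² diffeomorphism onto a domain Ω, t : Ω → (−ε, ε) the last component of Φ⁻¹, φ = det dΦ/‖n‖ where n is the Hodge dual of the wedge of the ∂Φ/∂x_i, and N = n/‖n‖. Let u : (−ε, ε) → ℝ be C² with u' > 0 and U = u ∘ t. Then D_N U = u'(t)/φ and D²_N U = (u''(t) − u'(t)·∂φ/∂s)/φ², where s is arc length along integral curves of N and D_N, D²_N are the first and second directional derivatives along N. -/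
open scoped InnerProductSpace

/-- `∂Φ/∂x_j`, the coordinate tangent vectors of the hypersurfaces `Γ_t : x ↦ Φ(x, t)`. -/
noncomputable def Pd {m : ℕ} (Φ : EuclideanSpace ℝ (Fin m) × ℝ → EuclideanSpace ℝ (Fin (m + 1)))
    (q : EuclideanSpace ℝ (Fin m) × ℝ) (j : Fin m) : EuclideanSpace ℝ (Fin (m + 1)) :=
  fderiv ℝ Φ q (EuclideanSpace.single j 1, 0)

/-- `∂Φ/∂t`. -/
noncomputable def Pt {m : ℕ} (Φ : EuclideanSpace ℝ (Fin m) × ℝ → EuclideanSpace ℝ (Fin (m + 1)))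
    (q : EuclideanSpace ℝ (Fin m) × ℝ) : EuclideanSpace ℝ (Fin (m + 1)) :=
  fderiv ℝ Φ q (0, 1)

/-- The determinant of the square matrix whose first `m` columns are the coordinate
tangent vectors `∂Φ/∂x_j` and whose last column is `w`.  With `w = ∂Φ/∂t` this is
`det dΦ`; as a function of `w` it is `⟪n, w⟫` for the Hodge-dual normal `n` of
`(∂Φ/∂x₁) ∧ ⋯ ∧ (∂Φ/∂x_m)`. -/
noncomputable def detWith {m : ℕ}
    (Φ : EuclideanSpace ℝ (Fin m) × ℝ → EuclideanSpace ℝ (Fin (m + 1)))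
    (q : EuclideanSpace ℝ (Fin m) × ℝ) (w : EuclideanSpace ℝ (Fin (m + 1))) : ℝ :=
  Matrix.det (Matrix.of fun i j : Fin (m + 1) =>
    (Fin.snoc (fun j' : Fin m => Pd Φ q j') w :
      Fin (m + 1) → EuclideanSpace ℝ (Fin (m + 1))) j i)

/-- `det dΦ`, the Jacobian determinant of `Φ`. -/
noncomputable def detJn {m : ℕ}
    (Φ : EuclideanSpace ℝ (Fin m) × ℝ → EuclideanSpace ℝ (Fin (m + 1)))
    (q : EuclideanSpace ℝ (Fin m) × ℝ) : ℝ :=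
  detWith Φ q (Pt Φ q)

/-!
Near `Φ q`, the map `t` is the last coordinate of a local inverse of `Φ`, so by the inverse
function theorem its derivative along `N` is the `t`-component of `(dΦ)⁻¹ N`. Writing
`n = ∑ⱼ aⱼ ∂Φ/∂xⱼ + b ∂Φ/∂t` and pairing with `n`, which is orthogonal to every `∂Φ/∂xⱼ` and
satisfies `⟪n, ∂Φ/∂t⟫ = det dΦ`, gives `‖n‖² = b det dΦ`, hence `D_N t = ‖n‖ / det dΦ = 1/φ`.
The two formulas are then the chain rule for `u ∘ t` along a curve on which `t` has speed `1/φ`.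
-/

open scoped Topology

section LocalInverse

variable {𝕜 : Type*} [NontriviallyNormedField 𝕜]
  {E : Type*} [NormedAddCommGroup E] [NormedSpace 𝕜 E] [CompleteSpace E]
  {F : Type*} [NormedAddCommGroup F] [NormedSpace 𝕜 F]
  {G : Type*} [NormedAddCommGroup G] [NormedSpace 𝕜 G]

theorem HasStrictFDerivAt.hasFDerivAt_of_comp_eqOn {Φ : E → F} {L : E ≃L[𝕜] F} {q : E}
    (hΦ : HasStrictFDerivAt Φ (L : E →L[𝕜] F) q) {S : Set E} (hS : S ∈ 𝓝 q)
    {f : E → G} {f' : E →L[𝕜] G} (hf : HasFDerivAt f f' q)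
    {t : F → G} (ht : ∀ x ∈ S, t (Φ x) = f x) :
    HasFDerivAt t (f'.comp (L.symm : F →L[𝕜] E)) (Φ q) := by
  set g := hΦ.localInverse Φ L q
  have hgq : g (Φ q) = q := hΦ.localInverse_apply_image
  have hfg : HasFDerivAt (f ∘ g) (f'.comp (L.symm : F →L[𝕜] E)) (Φ q) := by
    rw [← hgq] at hf
    exact hf.comp (Φ q) hΦ.to_localInverse.hasFDerivAt
  have hgS : ∀ᶠ y in 𝓝 (Φ q), g y ∈ S := by
    rw [← hgq] at hS
    exact hΦ.localInverse_continuousAt.eventually_mem hS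
  refine hfg.congr_of_eventuallyEq ?_
  filter_upwards [hΦ.eventually_right_inverse, hgS] with y hy hyS
  rw [Function.comp_apply, ← ht _ hyS, hy]

end LocalInverse

section Frame

variable {m : ℕ} (Φ : EuclideanSpace ℝ (Fin m) × ℝ → EuclideanSpace ℝ (Fin (m + 1)))
  (q : EuclideanSpace ℝ (Fin m) × ℝ)

theorem detWith_Pd (j : Fin m) : detWith Φ q (Pd Φ q j) = 0 := by
  unfold detWith
  rw [← Matrix.det_transpose]
  refine Matrix.det_zero_of_row_eq (i := j.castSucc) (j := Fin.last m)
    (Fin.castSucc_lt_last j).ne ?_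
  funext k
  simp [Matrix.transpose_apply, Fin.snoc_castSucc, Fin.snoc_last]

theorem fderiv_apply_eq_sum_Pd_add_Pt (v : EuclideanSpace ℝ (Fin m) × ℝ) :
    fderiv ℝ Φ q v = (∑ j, v.1 j • Pd Φ q j) + v.2 • Pt Φ q := by
  have hv : v = (∑ j, v.1 j • (EuclideanSpace.single j (1 : ℝ), (0 : ℝ))) +
      v.2 • ((0 : EuclideanSpace ℝ (Fin m)), (1 : ℝ)) := by
    refine Prod.ext ?_ ?_
    · simpa [Prod.fst_sum] using ((EuclideanSpace.basisFun (Fin m) ℝ).sum_repr v.1).symm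
    · simp [Prod.snd_sum]
  conv_lhs => rw [hv]
  simp only [map_add, map_sum, map_smul]
  rfl

noncomputable def prodRealBasis (m : ℕ) :
    Module.Basis (Fin (m + 1)) ℝ (EuclideanSpace ℝ (Fin m) × ℝ) :=
  ((EuclideanSpace.basisFun (Fin m) ℝ).toBasis.prod (Module.Basis.singleton (Fin 1) ℝ)).reindex
    finSumFinEquiv

theorem prodRealBasis_castSucc (j : Fin m) :
    prodRealBasis m j.castSucc = (EuclideanSpace.single j 1, (0 : ℝ)) := by
  rw [prodRealBasis, Module.Basis.reindex_apply, finSumFinEquiv_symm_apply_castSucc]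
  ext <;> simp

theorem prodRealBasis_last :
    prodRealBasis m (Fin.last m) = ((0 : EuclideanSpace ℝ (Fin m)), (1 : ℝ)) := by
  rw [prodRealBasis, Module.Basis.reindex_apply, finSumFinEquiv_symm_last]
  ext <;> simp

theorem det_toMatrix_fderiv_eq_detJn :
    (LinearMap.toMatrix (prodRealBasis m) (EuclideanSpace.basisFun (Fin (m + 1)) ℝ).toBasis
      (fderiv ℝ Φ q : _ →ₗ[ℝ] _)).det = detJn Φ q := by
  unfold detJn detWith
  congr 1
  ext i k
  rw [LinearMap.toMatrix_apply]
  induction k using Fin.lastCases with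
  | last => simp [prodRealBasis_last, Fin.snoc_last, Pt]
  | cast j => simp [prodRealBasis_castSucc, Fin.snoc_castSucc, Pd]

theorem exists_equiv_eq_fderiv_of_detJn_ne_zero (h : detJn Φ q ≠ 0) :
    ∃ L : (EuclideanSpace ℝ (Fin m) × ℝ) ≃L[ℝ] EuclideanSpace ℝ (Fin (m + 1)),
      (L : _ →L[ℝ] _) = fderiv ℝ Φ q := by
  have hunit : IsUnit (LinearMap.toMatrix (prodRealBasis m)
      (EuclideanSpace.basisFun (Fin (m + 1)) ℝ).toBasis (fderiv ℝ Φ q : _ →ₗ[ℝ] _)).det := by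
    rw [det_toMatrix_fderiv_eq_detJn]
    exact h.isUnit
  exact ⟨(LinearEquiv.ofIsUnitDet hunit).toContinuousLinearEquiv,
    ContinuousLinearMap.ext fun _ => rfl⟩

variable {Φ q}

theorem norm_ne_zero_of_detJn_ne_zero {n : EuclideanSpace ℝ (Fin (m + 1))}
    (hn : ∀ w, ⟪n, w⟫_ℝ = detWith Φ q w) (hdet : detJn Φ q ≠ 0) : ‖n‖ ≠ 0 :=
  norm_ne_zero_iff.mpr fun h0 => hdet (by rw [detJn, ← hn, h0, inner_zero_left])

theorem snd_symm_apply_mul_detJn {n : EuclideanSpace ℝ (Fin (m + 1))}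
    (hn : ∀ w, ⟪n, w⟫_ℝ = detWith Φ q w)
    {L : (EuclideanSpace ℝ (Fin m) × ℝ) ≃L[ℝ] EuclideanSpace ℝ (Fin (m + 1))}
    (hL : (L : _ →L[ℝ] _) = fderiv ℝ Φ q) :
    (L.symm n).2 * detJn Φ q = ‖n‖ ^ 2 := by
  have hsum : n = (∑ j, (L.symm n).1 j • Pd Φ q j) + (L.symm n).2 • Pt Φ q := by
    rw [← fderiv_apply_eq_sum_Pd_add_Pt, ← hL]
    simp
  have h := congrArg (⟪n, ·⟫_ℝ) hsum
  rw [real_inner_self_eq_norm_sq] at h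
  simp only [inner_add_right, inner_sum, real_inner_smul_right] at h
  simp only [hn, detWith_Pd, mul_zero, Finset.sum_const_zero, zero_add] at h
  rw [h, detJn]

theorem hasDerivAt_comp_of_hasDerivAt_unit_normal {S : Set (EuclideanSpace ℝ (Fin m) × ℝ)}
    (hS : S ∈ 𝓝 q) (hΦ : ContDiffAt ℝ 1 Φ q) (hdet : detJn Φ q ≠ 0)
    {n : EuclideanSpace ℝ (Fin (m + 1))} (hn : ∀ w, ⟪n, w⟫_ℝ = detWith Φ q w)
    {t : EuclideanSpace ℝ (Fin (m + 1)) → ℝ} (ht : ∀ x ∈ S, t (Φ x) = x.2)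
    {β : ℝ → EuclideanSpace ℝ (Fin (m + 1))} {s₀ : ℝ} (hβs₀ : β s₀ = Φ q)
    (hβ : HasDerivAt β (‖n‖⁻¹ • n) s₀) :
    HasDerivAt (fun s => t (β s)) (detJn Φ q / ‖n‖)⁻¹ s₀ := by
  obtain ⟨L, hL⟩ := exists_equiv_eq_fderiv_of_detJn_ne_zero Φ q hdet
  have hΦL : HasStrictFDerivAt Φ (L : _ →L[ℝ] _) q :=
    hL ▸ hΦ.hasStrictFDerivAt one_ne_zero
  have htΦ := hΦL.hasFDerivAt_of_comp_eqOn hS hasFDerivAt_snd ht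
  have hcomp := (hβs₀ ▸ htΦ).comp_hasDerivAt s₀ hβ
  have hspeed : (L.symm (‖n‖⁻¹ • n)).2 = (detJn Φ q / ‖n‖)⁻¹ := by
    have hsnd := snd_symm_apply_mul_detJn hn hL
    rw [map_smul, Prod.smul_snd, smul_eq_mul, inv_div,
      eq_div_iff hdet, mul_assoc, hsnd, sq,
      inv_mul_cancel_left₀ (norm_ne_zero_of_detJn_ne_zero hn hdet)]
  exact hcomp.congr_deriv hspeed

end Frame

theorem hasDerivAt_comp_and_deriv_of_speed_inv {u T ψ : ℝ → ℝ} {s₀ ψ' : ℝ}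
    (hu : ContDiff ℝ 2 u) (hT : ∀ᶠ s in 𝓝 s₀, HasDerivAt T (ψ s)⁻¹ s)
    (hψ : HasDerivAt ψ ψ' s₀) (hψs₀ : ψ s₀ ≠ 0) :
    HasDerivAt (fun s => u (T s)) (deriv u (T s₀) / ψ s₀) s₀ ∧
      HasDerivAt (deriv fun s => u (T s))
        ((deriv (deriv u) (T s₀) - deriv u (T s₀) * ψ') / ψ s₀ ^ 2) s₀ := by
  have hu1 : ∀ s, HasDerivAt T (ψ s)⁻¹ s →
      HasDerivAt (fun s => u (T s)) (deriv u (T s) * (ψ s)⁻¹) s := fun s hTs =>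
    ((hu.differentiable two_ne_zero _).hasDerivAt).comp s hTs
  have hu2 : Differentiable ℝ (deriv u) :=
    (contDiff_succ_iff_deriv.mp (show ContDiff ℝ (1 + 1) u from hu)).2.2.differentiable
      one_ne_zero
  refine ⟨by simpa [div_eq_mul_inv] using hu1 s₀ hT.self_of_nhds, ?_⟩
  have hderiv : deriv (fun s => u (T s)) =ᶠ[𝓝 s₀] fun s => deriv u (T s) * (ψ s)⁻¹ :=
    hT.mono fun s hTs => (hu1 s hTs).deriv
  have hprod := ((hu2 _).hasDerivAt.comp s₀ hT.self_of_nhds).mul (hψ.inv hψs₀)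
  refine (hprod.congr_of_eventuallyEq hderiv).congr_deriv ?_
  simp only [Pi.inv_apply, Function.comp_apply]
  field_simp
  ring

theorem stmt13_general (m : ℕ) (ε : ℝ)
    (S : Set (EuclideanSpace ℝ (Fin m) × ℝ)) (hS : S = Set.univ ×ˢ Set.Ioo (-ε) ε)
    (Φ : EuclideanSpace ℝ (Fin m) × ℝ → EuclideanSpace ℝ (Fin (m + 1)))
    (hΦ : ContDiffOn ℝ 2 Φ S)
    (Ω : Set (EuclideanSpace ℝ (Fin (m + 1)))) (hΩ : Ω = Φ '' S)
    (hdet : ∀ q ∈ S, 0 < detJn Φ q)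
    -- nv is the Hodge dual of (∂Φ/∂x₁) ∧ ⋯ ∧ (∂Φ/∂x_m)
    (nv : EuclideanSpace ℝ (Fin m) × ℝ → EuclideanSpace ℝ (Fin (m + 1)))
    (hnv : ∀ q ∈ S, ∀ w, ⟪nv q, w⟫_ℝ = detWith Φ q w)
    -- N = n/‖n‖ as a unit normal field on Ω
    (N : EuclideanSpace ℝ (Fin (m + 1)) → EuclideanSpace ℝ (Fin (m + 1)))
    (hN : ∀ q ∈ S, N (Φ q) = ‖nv q‖⁻¹ • nv q)
    -- φ = det dΦ/‖n‖ as a function on Ω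
    (φ : EuclideanSpace ℝ (Fin (m + 1)) → ℝ)
    (hφ : ∀ q ∈ S, φ (Φ q) = detJn Φ q / ‖nv q‖)
    -- t : Ω → (−ε, ε) is the last component of Φ⁻¹
    (t : EuclideanSpace ℝ (Fin (m + 1)) → ℝ) (ht : ∀ q ∈ S, t (Φ q) = q.2)
    -- ∂φ/∂s is the derivative of φ along unit-speed integral curves of N
    (dφds : EuclideanSpace ℝ (Fin (m + 1)) → ℝ)
    (hdφds : ∀ p ∈ Ω, ∀ α : ℝ → EuclideanSpace ℝ (Fin (m + 1)), α 0 = p →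
      (∀ᶠ s in nhds 0, α s ∈ Ω ∧ HasDerivAt α (N (α s)) s) →
      HasDerivAt (fun s => φ (α s)) (dφds p) 0)
    (u : ℝ → ℝ) (hu : ContDiff ℝ 2 u) :
    -- D_N U and D²_N U are the first and second derivatives of U = u ∘ t along the
    -- unit-speed integral curves of N
    ∀ q ∈ S, ∀ α : ℝ → EuclideanSpace ℝ (Fin (m + 1)), α 0 = Φ q →
      (∀ᶠ s in nhds 0, α s ∈ Ω ∧ HasDerivAt α (N (α s)) s) →
      HasDerivAt (fun s => u (t (α s))) (deriv u q.2 / φ (Φ q)) 0 ∧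
      HasDerivAt (deriv fun s => u (t (α s)))
        ((deriv (deriv u) q.2 - deriv u q.2 * dφds (Φ q)) / (φ (Φ q)) ^ 2) 0 := by
  have hSopen : IsOpen S := hS ▸ isOpen_univ.prod isOpen_Ioo
  have hspeed : ∀ p ∈ Ω, ∀ β : ℝ → EuclideanSpace ℝ (Fin (m + 1)), ∀ s₀, β s₀ = p →
      HasDerivAt β (N p) s₀ → HasDerivAt (fun s => t (β s)) (φ p)⁻¹ s₀ := by
    intro p hp β s₀ hβs₀ hβ
    obtain ⟨q', hq', rfl⟩ := hΩ ▸ hp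
    rw [hφ q' hq']
    exact hasDerivAt_comp_of_hasDerivAt_unit_normal (hSopen.mem_nhds hq')
      ((hΦ.contDiffAt (hSopen.mem_nhds hq')).of_le one_le_two) (hdet q' hq').ne'
      (hnv q' hq') ht hβs₀ (hN q' hq' ▸ hβ)
  intro q hq α hα0 hα
  have hφq : φ (Φ q) ≠ 0 := by
    rw [hφ q hq]
    exact div_ne_zero (hdet q hq).ne'
      (norm_ne_zero_of_detJn_ne_zero (hnv q hq) (hdet q hq).ne')
  have hT : ∀ᶠ s in 𝓝 0, HasDerivAt (fun s => t (α s)) (φ (α s))⁻¹ s :=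
    hα.mono fun s ⟨hαs, hα's⟩ => hspeed _ hαs α s rfl hα's
  simpa only [hα0, ht q hq] using hasDerivAt_comp_and_deriv_of_speed_inv (ψ := fun s => φ (α s))
    hu hT (hdφds _ (hΩ ▸ ⟨q, hq, rfl⟩) α hα0 hα) (hα0 ▸ hφq)

theorem stmt13 (m : ℕ) (hm : 1 ≤ m) (ε : ℝ) (hε : 0 < ε)
    (S : Set (EuclideanSpace ℝ (Fin m) × ℝ)) (hS : S = Set.univ ×ˢ Set.Ioo (-ε) ε)
    (Φ : EuclideanSpace ℝ (Fin m) × ℝ → EuclideanSpace ℝ (Fin (m + 1)))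
    (hΦ : ContDiffOn ℝ 2 Φ S) (hinj : Set.InjOn Φ S)
    (Ω : Set (EuclideanSpace ℝ (Fin (m + 1)))) (hΩ : Ω = Φ '' S) (hΩopen : IsOpen Ω)
    (hdet : ∀ q ∈ S, 0 < detJn Φ q)
    -- nv is the Hodge dual of (∂Φ/∂x₁) ∧ ⋯ ∧ (∂Φ/∂x_m)
    (nv : EuclideanSpace ℝ (Fin m) × ℝ → EuclideanSpace ℝ (Fin (m + 1)))
    (hnv : ∀ q ∈ S, ∀ w, ⟪nv q, w⟫_ℝ = detWith Φ q w)
    -- N = n/‖n‖ as a unit normal field on Ω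
    (N : EuclideanSpace ℝ (Fin (m + 1)) → EuclideanSpace ℝ (Fin (m + 1)))
    (hN : ∀ q ∈ S, N (Φ q) = ‖nv q‖⁻¹ • nv q)
    -- φ = det dΦ/‖n‖ as a function on Ω
    (φ : EuclideanSpace ℝ (Fin (m + 1)) → ℝ)
    (hφ : ∀ q ∈ S, φ (Φ q) = detJn Φ q / ‖nv q‖)
    -- t : Ω → (−ε, ε) is the last component of Φ⁻¹
    (t : EuclideanSpace ℝ (Fin (m + 1)) → ℝ) (ht : ∀ q ∈ S, t (Φ q) = q.2)
    -- ∂φ/∂s is the derivative of φ along unit-speed integral curves of N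
    (dφds : EuclideanSpace ℝ (Fin (m + 1)) → ℝ)
    (hdφds : ∀ p ∈ Ω, ∀ α : ℝ → EuclideanSpace ℝ (Fin (m + 1)), α 0 = p →
      (∀ᶠ s in nhds 0, α s ∈ Ω ∧ HasDerivAt α (N (α s)) s) →
      HasDerivAt (fun s => φ (α s)) (dφds p) 0)
    (u : ℝ → ℝ) (hu : ContDiff ℝ 2 u)
    (hu' : ∀ τ ∈ Set.Ioo (-ε) ε, 0 < deriv u τ) :
    -- D_N U and D²_N U are the first and second derivatives of U = u ∘ t along the
    -- unit-speed integral curves of N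
    ∀ q ∈ S, ∀ α : ℝ → EuclideanSpace ℝ (Fin (m + 1)), α 0 = Φ q →
      (∀ᶠ s in nhds 0, α s ∈ Ω ∧ HasDerivAt α (N (α s)) s) →
      HasDerivAt (fun s => u (t (α s))) (deriv u q.2 / φ (Φ q)) 0 ∧
      HasDerivAt (deriv fun s => u (t (α s)))
        ((deriv (deriv u) q.2 - deriv u q.2 * dφds (Φ q)) / (φ (Φ q)) ^ 2) 0 :=
  stmt13_general m ε S hS Φ hΦ Ω hΩ hdet nv hnv N hN φ hφ t ht dφds hdφds u hu
end
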